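/- Every strongly stable ideal J ⊆ R has a unique minimal set of Borel generators: a unique minimal (under inclusion) set of monomials T such that J = Borel(T). -/
import Mathlib


open Finset

/-- A monomial in `n` variables, given by its exponent vector. -/
abbrev Mon (n : ℕ) := Fin n → ℕ

/-- The set of monomials of a monomial ideal: a set of monomials upward closed
under divisibility (i.e. closed under multiplication by monomials). -/
def IsMonIdeal {n : ℕ} (I : Set (Mon n)) : Prop := ∀ a ∈ I, ∀ b, a ≤ b → b ∈ I

/-- The Borel move sending `m` to `m · y_i / y_j`. -/
def borelMove {n : ℕ} (m : Mon n) (i j : Fin n) : Mon n :=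
  fun k => if k = i then m k + 1 else if k = j then m k - 1 else m k

/-- A monomial ideal is strongly stable if it is closed under Borel moves
`m ↦ m · y_i / y_j` for `i < j` and `y_j ∣ m`. -/
def StronglyStable {n : ℕ} (I : Set (Mon n)) : Prop :=
  IsMonIdeal I ∧ ∀ m ∈ I, ∀ i j : Fin n, i < j → 0 < m j → borelMove m i j ∈ I

/-- `borelCl T` : the smallest strongly stable ideal containing the set of monomials `T`. -/
def borelCl {n : ℕ} (T : Set (Mon n)) : Set (Mon n) :=
  ⋂₀ {J : Set (Mon n) | StronglyStable J ∧ T ⊆ J}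

/-- The map `ψ : S → R`, `x_i ↦ y_i^{w_i}`, on exponent vectors. -/
def psi {n : ℕ} (w : Fin n → ℕ) (a : Mon n) : Mon n := fun i => w i * a i

/-- A monomial ideal `I ⊆ S` is `w`-stable if it equals its weighted Borel
closure `ψ⁻¹(Borel(ψ(I)))`. -/
def wStable {n : ℕ} (w : Fin n → ℕ) (I : Set (Mon n)) : Prop :=
  I = psi w ⁻¹' borelCl (psi w '' I)

/-- Total degree of a monomial. -/
def deg {n : ℕ} (m : Mon n) : ℕ := ∑ i, m i

/-- Weighted degree `deg_w(m) = deg(ψ(m))`. -/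
def degW {n : ℕ} (w : Fin n → ℕ) (m : Mon n) : ℕ := ∑ i, w i * m i

/-- `psum m t` : the number of variables (with multiplicity) of index `≤ t`
in the factorization of `m`. -/
def psum {n : ℕ} (m : Mon n) (t : Fin n) : ℕ := ∑ i ∈ Finset.univ.filter (· ≤ t), m i

/-- `psumLt m t` : the number of variables (with multiplicity) of index `< t`. -/
def psumLt {n : ℕ} (m : Mon n) (t : Fin n) : ℕ := ∑ i ∈ Finset.univ.filter (· < t), m i

/-- `precedes u v` : `u ≻ v`, i.e. `u` precedes `v` in the Borel order: writing
`u = y_{i_1}⋯y_{i_r}`, `v = y_{j_1}⋯y_{j_s}` with increasing indices and `r ≥ s`,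
we have `i_k ≤ j_k` for all `k ≤ s`.  Equivalently, for every index `t` the number
of factors of `v` of index `≤ t` is at most that of `u`. -/
def precedes {n : ℕ} (u v : Mon n) : Prop := ∀ t : Fin n, psum v t ≤ psum u t

/-- `max(m)` : the largest (1-based) index of a variable dividing `m` (`0` for `m = 1`). -/
def maxVar {n : ℕ} (m : Mon n) : ℕ :=
  (Finset.univ.filter (fun i => m i ≠ 0)).sup (fun i => i.val + 1)

/-- `max(m)` with the convention `max(1) = 1`. -/
def maxVarOne {n : ℕ} (m : Mon n) : ℕ := max 1 (maxVar m)

/-- `trunc d m` : the `d`-truncation of a monomial, keeping the first `d`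
variables (with multiplicity) of the increasing factorization of `m`
(equal to `m` itself when `d ≥ deg m`). -/
def trunc {n : ℕ} (d : ℕ) (m : Mon n) : Mon n :=
  fun k => min (psum m k) d - min (psumLt m k) d

/-- The `d`-truncation of a monomial ideal: the ideal generated by the
`d`-truncations of all its monomials. -/
def truncIdeal {n : ℕ} (d : ℕ) (J : Set (Mon n)) : Set (Mon n) :=
  {v | ∃ m ∈ J, trunc d m ≤ v}

/-- `minGens J` : the minimal monomial generators of a monomial ideal, i.e. its
monomials not properly divisible by another monomial of the ideal. -/
def minGens {n : ℕ} (J : Set (Mon n)) : Set (Mon n) :=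
  {u ∈ J | ∀ v ∈ J, v ≤ u → v = u}


section Aux

variable {n : ℕ}

lemma subset_borelCl (T : Set (Mon n)) : T ⊆ borelCl T := by
  intro m hm
  rw [borelCl, Set.mem_sInter]
  intro J hJ
  exact hJ.2 hm

lemma stronglyStable_borelCl (T : Set (Mon n)) : StronglyStable (borelCl T) := by
  constructor
  · intro a ha b hab
    rw [borelCl, Set.mem_sInter] at *
    intro K hK
    exact hK.1.1 a (ha K hK) b hab
  · intro m hm i j hij hj
    rw [borelCl, Set.mem_sInter] at *
    intro K hK
    exact hK.1.2 m (hm K hK) i j hij hj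

lemma borelCl_min {T K : Set (Mon n)} (hK : StronglyStable K) (hTK : T ⊆ K) :
    borelCl T ⊆ K :=
  Set.sInter_subset_of_mem ⟨hK, hTK⟩

lemma sum_le_sum_borelMove (m : Mon n) (i j : Fin n) (hij : i ≠ j) (hj : 0 < m j)
    (s : Finset (Fin n)) (h : j ∈ s → i ∈ s) :
    ∑ k ∈ s, m k ≤ ∑ k ∈ s, borelMove m i j k := by
  by_cases hjs : j ∈ s
  · have his := h hjs
    have hie : i ∈ s.erase j := Finset.mem_erase.2 ⟨hij, his⟩
    rw [← Finset.sum_erase_add s m hjs, ← Finset.sum_erase_add (s.erase j) m hie,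
        ← Finset.sum_erase_add s (borelMove m i j) hjs,
        ← Finset.sum_erase_add (s.erase j) (borelMove m i j) hie]
    have h1 : ∀ k ∈ (s.erase j).erase i, borelMove m i j k = m k := by
      intro k hk
      simp only [Finset.mem_erase] at hk
      simp [borelMove, hk.1, hk.2.1]
    have hc : ∑ k ∈ (s.erase j).erase i, borelMove m i j k
        = ∑ k ∈ (s.erase j).erase i, m k := Finset.sum_congr rfl h1
    have hbi : borelMove m i j i = m i + 1 := by simp [borelMove]
    have hbj : borelMove m i j j = m j - 1 := by simp [borelMove, Ne.symm hij]
    rw [hc, hbi, hbj]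
    omega
  · apply Finset.sum_le_sum
    intro k hk
    have hkj : k ≠ j := fun e => hjs (e ▸ hk)
    by_cases hki : k = i
    · subst hki; simp [borelMove]
    · simp [borelMove, hki, hkj]

lemma deg_le_deg_borelMove (m : Mon n) (i j : Fin n) (hij : i < j) (hj : 0 < m j) :
    deg m ≤ deg (borelMove m i j) :=
  sum_le_sum_borelMove m i j hij.ne hj Finset.univ (fun _ => Finset.mem_univ i)

lemma psum_le_psum_borelMove (m : Mon n) (i j : Fin n) (hij : i < j) (hj : 0 < m j)
    (k : Fin n) : psum m k ≤ psum (borelMove m i j) k := by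
  apply sum_le_sum_borelMove m i j hij.ne hj
  intro hjs
  simp only [Finset.mem_filter, Finset.mem_univ, true_and] at *
  exact le_trans hij.le hjs

lemma borelCl_singleton_le {t m : Mon n} (h : m ∈ borelCl {t}) :
    deg t ≤ deg m ∧ ∀ k, psum t k + deg t ≤ psum m k + deg m := by
  have hS : StronglyStable
      {u : Mon n | deg t ≤ deg u ∧ ∀ k, psum t k + deg t ≤ psum u k + deg u} := by
    constructor
    · intro a ha b hab
      have hd : deg a ≤ deg b := Finset.sum_le_sum fun i _ => hab i
      have hp : ∀ k, psum a k ≤ psum b k := fun k => Finset.sum_le_sum fun i _ => hab i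
      exact ⟨le_trans ha.1 hd, fun k => by have h1 := ha.2 k; have h2 := hp k; omega⟩
    · intro u hu i j hij hjp
      have hd := deg_le_deg_borelMove u i j hij hjp
      have hp := psum_le_psum_borelMove u i j hij hjp
      exact ⟨le_trans hu.1 hd, fun k => by have h1 := hu.2 k; have h2 := hp k; omega⟩
  exact borelCl_min hS (by
    intro x hx
    rcases hx with rfl
    exact ⟨le_rfl, fun k => le_rfl⟩) h

lemma psum_eq_psumLt_add (m : Mon n) (k : Fin n) : psum m k = psumLt m k + m k := by
  unfold psum psumLt
  have hset : Finset.univ.filter (· ≤ k) = insert k (Finset.univ.filter (· < k)) := by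
    ext i
    simp only [Finset.mem_filter, Finset.mem_univ, true_and, Finset.mem_insert]
    constructor
    · intro h; rcases lt_or_eq_of_le h with h' | h'
      · exact Or.inr h'
      · exact Or.inl h'
    · rintro (rfl | h)
      · exact le_rfl
      · exact le_of_lt h
  rw [hset, Finset.sum_insert (by simp)]
  omega

lemma eq_of_psum_eq {s t : Mon n} (h : ∀ k, psum s k = psum t k) : s = t := by
  have step : ∀ k : Fin n, (∀ j : Fin n, j < k → s j = t j) → s k = t k := by
    intro k ih
    have h1 := psum_eq_psumLt_add s k
    have h2 := psum_eq_psumLt_add t k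
    have hlt : psumLt s k = psumLt t k := by
      unfold psumLt
      exact Finset.sum_congr rfl fun i hi => ih i (Finset.mem_filter.1 hi).2
    have := h k
    omega
  have key : ∀ N, ∀ k : Fin n, k.val < N → s k = t k := by
    intro N
    induction N with
    | zero => intro k hk; exact absurd hk (Nat.not_lt_zero _)
    | succ N ihN =>
      intro k hk
      apply step
      intro j hj
      apply ihN
      have : j.val < k.val := hj
      omega
  funext k
  exact key n k k.isLt

/-- The measure used for induction. -/
def mu (m : Mon n) : ℕ := (∑ k, (psum m k + deg m)) + deg m

lemma mu_lt {s m : Mon n} (h : m ∈ borelCl {s}) (hne : s ≠ m) : mu s < mu m := by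
  obtain ⟨hd, hp⟩ := borelCl_singleton_le h
  unfold mu
  rcases eq_or_lt_of_le hd with h' | h'
  · -- degrees equal; psums ≤ with one strict
    have hple : ∀ k, psum s k ≤ psum m k := fun k => by have := hp k; omega
    have hex : ∃ k, psum s k ≠ psum m k := by
      by_contra hc
      push_neg at hc
      exact hne (eq_of_psum_eq hc)
    obtain ⟨k0, hk0⟩ := hex
    have hstrict : ∑ k, (psum s k + deg s) < ∑ k, (psum m k + deg m) := by
      apply Finset.sum_lt_sum (fun k _ => by have := hp k; omega)
      exact ⟨k0, Finset.mem_univ k0, by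
        have := hple k0
        have hlt : psum s k0 < psum m k0 := lt_of_le_of_ne this hk0
        omega⟩
    omega
  · have hsum : ∑ k, (psum s k + deg s) ≤ ∑ k, (psum m k + deg m) :=
      Finset.sum_le_sum fun k _ => hp k
    omega

lemma mem_borelCl_exists {T : Set (Mon n)} {m : Mon n} (h : m ∈ borelCl T) :
    ∃ s ∈ T, m ∈ borelCl {s} := by
  have hU : StronglyStable (⋃ s ∈ T, borelCl {s}) := by
    constructor
    · intro a ha b hab
      simp only [Set.mem_iUnion] at *
      obtain ⟨s, hs, has⟩ := ha
      exact ⟨s, hs, (stronglyStable_borelCl {s}).1 a has b hab⟩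
    · intro u hu i j hij hj
      simp only [Set.mem_iUnion] at *
      obtain ⟨s, hs, hus⟩ := hu
      exact ⟨s, hs, (stronglyStable_borelCl {s}).2 u hus i j hij hj⟩
  have hsub : T ⊆ ⋃ s ∈ T, borelCl {s} :=
    fun s hs => Set.mem_biUnion hs (subset_borelCl {s} (Set.mem_singleton s))
  have := borelCl_min hU hsub h
  simpa using this

end Aux

/-- Every strongly stable ideal `J` has a unique minimal (under
inclusion) set of Borel generators `T` with `Borel(T) = J`. -/
theorem stmt8 {n : ℕ} (J : Set (Mon n)) (hJ : StronglyStable J) :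
    ∃! T : Set (Mon n), borelCl T = J ∧ ∀ T' : Set (Mon n), borelCl T' = J → T ⊆ T' := by
  classical
  set T : Set (Mon n) := {t | t ∈ J ∧ ∀ s ∈ J, t ∈ borelCl {s} → s = t} with hTdef
  have hTJ : T ⊆ J := fun t ht => ht.1
  -- every element of J is in borelCl T, by strong induction on mu
  have hgen : ∀ N, ∀ m ∈ J, mu m < N → m ∈ borelCl T := by
    intro N
    induction N with
    | zero => intro m _ h; exact absurd h (Nat.not_lt_zero _)
    | succ N ih =>
      intro m hm hμ
      by_cases hmT : m ∈ T
      · exact subset_borelCl T hmT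
      · have hex : ∃ s ∈ J, m ∈ borelCl {s} ∧ s ≠ m := by
          simp only [hTdef, Set.mem_setOf_eq, not_and, not_forall] at hmT
          obtain ⟨s, hsJ, hms, hsne⟩ := hmT hm
          exact ⟨s, hsJ, hms, hsne⟩
        obtain ⟨s, hsJ, hms, hsne⟩ := hex
        have hlt := mu_lt hms hsne
        have hsT : s ∈ borelCl T := ih s hsJ (by omega)
        exact borelCl_min (stronglyStable_borelCl T)
          (Set.singleton_subset_iff.2 hsT) hms
  have hclT : borelCl T = J := by
    apply Set.Subset.antisymm (borelCl_min hJ hTJ)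
    intro m hm
    exact hgen (mu m + 1) m hm (Nat.lt_succ_self _)
  have hmin : ∀ T' : Set (Mon n), borelCl T' = J → T ⊆ T' := by
    intro T' hT' t ht
    have htJ : t ∈ J := ht.1
    have htc : t ∈ borelCl T' := hT' ▸ htJ
    obtain ⟨s, hsT', hts⟩ := mem_borelCl_exists htc
    have hsJ : s ∈ J := by
      have hsub : T' ⊆ J := hT' ▸ subset_borelCl T'
      exact hsub hsT'
    have heq := ht.2 s hsJ hts
    rwa [← heq]
  refine ⟨T, ⟨hclT, hmin⟩, ?_⟩
  intro T' hT'
  exact Set.Subset.antisymm (hT'.2 T hclT) (hmin T' hT'.1)
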